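/- arXiv:2405.13618 — 3 statements merged into one kernel-verified Lean document; each statement's English description precedes it below -/
import Mathlib

section
/- Let S_α(a,b) = α(b−a)/(2·arctan((b^α−a^α)/(b^α+a^α))) for a ≠ b positive. If 1/2 ≤ α ≤ √2/2, then S_α(a,b) < (a+b)/2 for all positive a ≠ b. -/
/-!
With `L = (log b - log a) / 2` one has `(b - a) / (b + a) = tanh L` and
`(b^α - a^α) / (b^α + a^α) = tanh (α L)`, so for `a < b` the inequality says
`α tanh (s / α) < arctan (tanh s)` at `s = α L > 0`. Both sides vanish at `0`, with derivatives
`1 / cosh (s / α) ^ 2` and `1 / cosh (2 s)`; as `s / α ≥ √2 s`, it suffices that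
`cosh (2 s) < cosh (√2 s) ^ 2`, i.e. `log cosh (√2 y) < 2 log cosh y`. Differentiating once more,
this comes down to `tanh (√2 y) < √2 tanh y`, which holds because `cosh` increases on `[0, ∞)`.
-/

open Real Set

theorem lt_of_hasDerivAt_lt_of_eq {f g f' g' : ℝ → ℝ} {a y : ℝ}
    (hf : ∀ x, HasDerivAt f (f' x) x) (hg : ∀ x, HasDerivAt g (g' x) x) (ha : f a = g a)
    (hlt : ∀ x, a < x → f' x < g' x) (hy : a < y) : f y < g y := by
  have hmono : StrictMonoOn (g - f) (Ici a) := by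
    refine strictMonoOn_of_hasDerivWithinAt_pos (convex_Ici a)
      (fun x _ => ((hg x).sub (hf x)).continuousAt.continuousWithinAt)
      (fun x _ => ((hg x).sub (hf x)).hasDerivWithinAt) ?_
    rw [interior_Ici]
    exact fun x hx => sub_pos.2 (hlt x hx)
  have := hmono self_mem_Ici hy.le hy
  simp only [Pi.sub_apply, ha, sub_self] at this
  linarith

namespace Real

theorem hasDerivAt_tanh (x : ℝ) : HasDerivAt tanh (1 / cosh x ^ 2) x := by
  have h := (hasDerivAt_sinh x).div (hasDerivAt_cosh x) (cosh_pos x).ne'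
  rw [show tanh = fun y => sinh y / cosh y from funext tanh_eq_sinh_div_cosh]
  refine h.congr_deriv ?_
  rw [← sq, ← sq, cosh_sq_sub_sinh_sq x]

theorem hasDerivAt_log_cosh (x : ℝ) : HasDerivAt (fun y => log (cosh y)) (tanh x) x := by
  simpa only [tanh_eq_sinh_div_cosh] using (hasDerivAt_cosh x).log (cosh_pos x).ne'

theorem hasDerivAt_arctan_tanh (x : ℝ) :
    HasDerivAt (fun y => arctan (tanh y)) (1 / cosh (2 * x)) x := by
  refine ((hasDerivAt_arctan (tanh x)).comp x (hasDerivAt_tanh x)).congr_deriv ?_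
  have := cosh_pos x
  rw [cosh_two_mul, tanh_eq_sinh_div_cosh]
  field_simp

theorem tanh_mul_lt_mul_tanh {c y : ℝ} (hc : 1 < c) (hy : 0 < y) : tanh (c * y) < c * tanh y := by
  refine lt_of_hasDerivAt_lt_of_eq (fun x => (hasDerivAt_tanh (c * x)).comp x
    ((hasDerivAt_id x).const_mul c)) (fun x => (hasDerivAt_tanh x).const_mul c) (by simp) ?_ hy
  intro x hx
  have hcosh : cosh x < cosh (c * x) := by
    rw [cosh_lt_cosh, abs_of_pos hx, abs_of_pos (by positivity)]
    nlinarith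
  have : 1 / cosh (c * x) ^ 2 < 1 / cosh x ^ 2 := by gcongr
  rw [mul_one, mul_comm]
  exact mul_lt_mul_of_pos_left this (by linarith)

theorem log_cosh_mul_lt {c y : ℝ} (hc : 1 < c) (hy : 0 < y) :
    log (cosh (c * y)) < c ^ 2 * log (cosh y) := by
  refine lt_of_hasDerivAt_lt_of_eq (fun x => (hasDerivAt_log_cosh (c * x)).comp x
    ((hasDerivAt_id x).const_mul c)) (fun x => (hasDerivAt_log_cosh x).const_mul (c ^ 2))
    (by simp) ?_ hy
  intro x hx
  rw [mul_one, mul_comm, sq, mul_assoc]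
  exact mul_lt_mul_of_pos_left (tanh_mul_lt_mul_tanh hc hx) (by linarith)

theorem mul_tanh_div_lt_arctan_tanh {α s : ℝ} (hα : 0 < α) (hα' : α ≤ √2 / 2) (hs : 0 < s) :
    α * tanh (s / α) < arctan (tanh s) := by
  have hderiv (x : ℝ) : HasDerivAt (fun y => α * tanh (y / α)) (1 / cosh (x / α) ^ 2) x := by
    refine (((hasDerivAt_tanh (x / α)).comp x ((hasDerivAt_id x).div_const α)).const_mul α
      ).congr_deriv ?_
    field_simp
  refine lt_of_hasDerivAt_lt_of_eq hderiv hasDerivAt_arctan_tanh (by simp) ?_ hs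
  intro x hx
  have hsqrt : √2 * √2 = 2 := mul_self_sqrt zero_le_two
  have hle : √2 * x ≤ x / α := by
    have : √2 * α ≤ 1 := by nlinarith [sqrt_nonneg 2]
    rw [le_div_iff₀ hα]
    nlinarith
  have hlog : log (cosh (2 * x)) < log (cosh (x / α) ^ 2) := calc
    log (cosh (2 * x)) = log (cosh (√2 * (√2 * x))) := by rw [← mul_assoc, hsqrt]
    _ < √2 ^ 2 * log (cosh (√2 * x)) :=
      log_cosh_mul_lt (by simp [lt_sqrt]) (by positivity)
    _ ≤ 2 * log (cosh (x / α)) := by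
      rw [sq_sqrt zero_le_two]
      gcongr
      rw [cosh_le_cosh, abs_of_pos (by positivity), abs_of_pos (by positivity)]
      exact hle
    _ = log (cosh (x / α) ^ 2) := by rw [log_pow]; norm_num
  rw [log_lt_log_iff (cosh_pos _) (by positivity)] at hlog
  gcongr

theorem tanh_half_sub_log {x y : ℝ} (hx : 0 < x) (hy : 0 < y) :
    tanh ((log y - log x) / 2) = (y - x) / (y + x) := by
  have ht : (y - x) / (y + x) ∈ Ioo (-1) 1 := by
    constructor
    · rw [lt_div_iff₀ (by positivity)]; linarith
    · rw [div_lt_iff₀ (by positivity)]; linarith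
  have hratio : (1 + (y - x) / (y + x)) / (1 - (y - x) / (y + x)) = y / x := by
    have : y + x ≠ 0 := by positivity
    rw [one_add_div this, one_sub_div this, div_div_div_cancel_right₀ this,
      show y + x + (y - x) = 2 * y by ring, show y + x - (y - x) = 2 * x by ring,
      mul_div_mul_left _ _ two_ne_zero]
  rw [← tanh_artanh ht, artanh_eq_half_log (Ioo_subset_Icc_self ht), hratio,
    log_div hy.ne' hx.ne']
  ring_nf

end Real

noncomputable def seiffertMean (α a b : ℝ) : ℝ :=
  α * (b - a) / (2 * arctan ((b ^ α - a ^ α) / (b ^ α + a ^ α)))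

theorem seiffertMean_comm (α a b : ℝ) : seiffertMean α a b = seiffertMean α b a := by
  unfold seiffertMean
  rw [show (a ^ α - b ^ α) / (a ^ α + b ^ α) = -((b ^ α - a ^ α) / (b ^ α + a ^ α)) by ring,
    arctan_neg]
  ring

theorem seiffertMean_lt_of_lt {α a b : ℝ} (hα : 0 < α) (hα' : α ≤ √2 / 2) (ha : 0 < a)
    (hab : a < b) : seiffertMean α a b < (a + b) / 2 := by
  have hb : 0 < b := ha.trans hab
  set L := (log b - log a) / 2
  have hL : 0 < L := div_pos (sub_pos.2 (log_lt_log ha hab)) two_pos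
  have htanh : tanh L = (b - a) / (b + a) := tanh_half_sub_log ha hb
  have htanh_pos : 0 < tanh L := by
    rw [htanh]
    exact div_pos (sub_pos.2 hab) (by positivity)
  have hba : b - a = (b + a) * tanh L := by
    rw [htanh]
    field_simp
  have hpow : (b ^ α - a ^ α) / (b ^ α + a ^ α) = tanh (α * L) := by
    rw [← tanh_half_sub_log (rpow_pos_of_pos ha α) (rpow_pos_of_pos hb α), log_rpow hb,
      log_rpow ha]
    congr 1
    simp only [L]
    ring
  have hkey : α * tanh L < arctan (tanh (α * L)) := by
    simpa only [mul_div_cancel_left₀ _ hα.ne'] using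
      mul_tanh_div_lt_arctan_tanh hα hα' (mul_pos hα hL)
  have harctan : 0 < arctan (tanh (α * L)) := by
    have := mul_pos hα htanh_pos
    linarith
  unfold seiffertMean
  rw [hpow, hba, div_lt_div_iff₀ (by positivity) two_pos]
  nlinarith

theorem stmt_2 (α a b : ℝ) (hα1 : 1 / 2 ≤ α) (hα2 : α ≤ Real.sqrt 2 / 2)
    (ha : 0 < a) (hb : 0 < b) (hab : a ≠ b) :
    α * (b - a) / (2 * Real.arctan ((b ^ α - a ^ α) / (b ^ α + a ^ α))) < (a + b) / 2 := by
  have hα : 0 < α := by linarith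
  change seiffertMean α a b < (a + b) / 2
  rcases hab.lt_or_gt with h | h
  · exact seiffertMean_lt_of_lt hα hα2 ha h
  · rw [seiffertMean_comm, add_comm]
    exact seiffertMean_lt_of_lt hα hα2 hb h
end

section
/- For 0 < α ≤ √2/2 and all positive a ≠ b, R(A,S_α,G)(a,b) < S_α(a,b), where S_α(a,b) = α(b−a)/(2·arctan((b^α−a^α)/(b^α+a^α))), A is the arithmetic mean, G the geometric mean, and R(K,M,N)(a,b) = K(M(a,N(a,b)), M(N(a,b),b)). In particular, the key scalar inequality is arctan(tanh(αx)) − 2·arctan(tanh(αx/2)) < 0 for all x > 0. -/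
/-!
Writing `a ^ α = exp (α log a)`, the argument of `arctan` in `S_α(a, b)` is `tanh (α L / 2)` with
`L = log b - log a`, and since `√(ab)` halves `L`, both terms of `R(A, S_α, G)(a, b)` have the
argument `tanh (α L / 4)`. The inequality therefore reduces to `arctan (tanh (2x)) < 2 arctan (tanh x)`
for `x > 0`; with `u = tanh x ∈ (0, 1)` this is
`arctan (2u / (1 + u²)) < arctan (2u / (1 - u²)) = 2 arctan u`.
-/

open Real

lemma Real.tanh_two_mul (x : ℝ) : tanh (2 * x) = 2 * tanh x / (1 + tanh x ^ 2) := by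
  have hc := (cosh_pos x).ne'
  rw [tanh_eq_sinh_div_cosh, tanh_eq_sinh_div_cosh, sinh_two_mul, cosh_two_mul]
  field_simp

lemma Real.tanh_pos {x : ℝ} (hx : 0 < x) : 0 < tanh x := by
  rw [tanh_eq_sinh_div_cosh]
  exact div_pos (sinh_pos_iff.mpr hx) (cosh_pos x)

lemma Real.tanh_sub_div_two (A B : ℝ) :
    tanh ((A - B) / 2) = (exp A - exp B) / (exp A + exp B) := by
  have hA : exp A = exp ((A + B) / 2) * exp ((A - B) / 2) := by rw [← exp_add]; ring_nf
  have hB : exp B = exp ((A + B) / 2) * exp (-((A - B) / 2)) := by rw [← exp_add]; ring_nf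
  rw [tanh_eq, hA, hB, ← mul_sub, ← mul_add, mul_div_mul_left _ _ (exp_pos _).ne']

lemma Real.arctan_two_mul_div_one_add_sq_lt {u : ℝ} (h0 : 0 < u) (h1 : u < 1) :
    arctan (2 * u / (1 + u ^ 2)) < 2 * arctan u := by
  rw [two_mul_arctan (by linarith) h1]
  apply arctan_strictMono
  have hpos : 0 < 1 - u ^ 2 := by nlinarith
  exact div_lt_div_of_pos_left (by positivity) hpos (by nlinarith)

lemma Real.arctan_tanh_two_mul_lt {x : ℝ} (hx : 0 < x) :
    arctan (tanh (2 * x)) < 2 * arctan (tanh x) := by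
  rw [tanh_two_mul]
  exact arctan_two_mul_div_one_add_sq_lt (tanh_pos hx) (tanh_lt_one x)

lemma rpow_sub_rpow_div_rpow_add_rpow {x y : ℝ} (hx : 0 < x) (hy : 0 < y) (α : ℝ) :
    (y ^ α - x ^ α) / (y ^ α + x ^ α) = tanh (α * (log y - log x) / 2) := by
  rw [rpow_def_of_pos hx, rpow_def_of_pos hy, mul_sub, mul_comm α, mul_comm α,
    tanh_sub_div_two]

/-- The mean `S_α` of the paper. -/
noncomputable def symmetricMean (α u v : ℝ) : ℝ :=
  α * (v - u) / (2 * arctan ((v ^ α - u ^ α) / (v ^ α + u ^ α)))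

lemma symmetricMean_comm (α u v : ℝ) : symmetricMean α u v = symmetricMean α v u := by
  unfold symmetricMean
  rw [← neg_sub (v ^ α), add_comm (v ^ α), neg_div, arctan_neg]
  ring

lemma symmetricMean_eq_tanh (α : ℝ) {u v : ℝ} (hu : 0 < u) (hv : 0 < v) :
    symmetricMean α u v = α * (v - u) / (2 * arctan (tanh (α * (log v - log u) / 2))) := by
  rw [symmetricMean, rpow_sub_rpow_div_rpow_add_rpow hu hv]

lemma half_add_symmetricMean_sqrt_lt {α a b : ℝ} (hα : 0 < α) (ha : 0 < a) (hb : 0 < b)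
    (hab : a < b) :
    (symmetricMean α a √(a * b) + symmetricMean α √(a * b) b) / 2 < symmetricMean α a b := by
  have hg : 0 < √(a * b) := sqrt_pos.mpr (mul_pos ha hb)
  set L := log b - log a
  have hL : 0 < L := sub_pos.mpr (log_lt_log ha hab)
  have hlog : log √(a * b) = (log a + log b) / 2 := by
    rw [log_sqrt (mul_pos ha hb).le, log_mul ha.ne' hb.ne']
  set T := arctan (tanh (α * L / 4))
  have hhalf : arctan (tanh (α * L / 2)) < 2 * T := by
    simpa only [show 2 * (α * L / 4) = α * L / 2 by ring] using
      arctan_tanh_two_mul_lt (x := α * L / 4) (by positivity)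
  have hlhs : (symmetricMean α a √(a * b) + symmetricMean α √(a * b) b) / 2
      = α * (b - a) / (2 * (2 * T)) := by
    rw [symmetricMean_eq_tanh α ha hg, symmetricMean_eq_tanh α hg hb, hlog,
      show α * ((log a + log b) / 2 - log a) / 2 = α * L / 4 by ring,
      show α * (log b - (log a + log b) / 2) / 2 = α * L / 4 by ring]
    ring
  rw [hlhs, symmetricMean_eq_tanh α ha hb]
  exact div_lt_div_of_pos_left (mul_pos hα (sub_pos.mpr hab))
    (mul_pos two_pos (arctan_pos.mpr (tanh_pos (by positivity))))
    (by linarith)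

theorem stmt_16_general (α : ℝ) (hα : 0 < α) :
    (∀ x : ℝ, 0 < x →
      Real.arctan (Real.tanh (α * x)) - 2 * Real.arctan (Real.tanh (α * x / 2)) < 0) ∧
    (∀ a b : ℝ, 0 < a → 0 < b → a ≠ b →
      (let S : ℝ → ℝ → ℝ := fun u v =>
        α * (v - u) / (2 * Real.arctan ((v ^ α - u ^ α) / (v ^ α + u ^ α)));
      (S a (Real.sqrt (a * b)) + S (Real.sqrt (a * b)) b) / 2 < S a b)) := by
  refine ⟨fun x hx => ?_, fun a b ha hb hab => ?_⟩
  · have h := arctan_tanh_two_mul_lt (x := α * x / 2) (by positivity)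
    rw [show 2 * (α * x / 2) = α * x by ring] at h
    linarith
  · change (symmetricMean α a √(a * b) + symmetricMean α √(a * b) b) / 2 < symmetricMean α a b
    rcases hab.lt_or_gt with h | h
    · exact half_add_symmetricMean_sqrt_lt hα ha hb h
    · have h' := half_add_symmetricMean_sqrt_lt hα hb ha h
      rw [mul_comm b a, symmetricMean_comm α b, symmetricMean_comm α _ a,
        symmetricMean_comm α b a, add_comm] at h'
      exact h'

theorem stmt_16 (α : ℝ) (hα : 0 < α) (hα2 : α ≤ Real.sqrt 2 / 2) :
    (∀ x : ℝ, 0 < x →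
      Real.arctan (Real.tanh (α * x)) - 2 * Real.arctan (Real.tanh (α * x / 2)) < 0) ∧
    (∀ a b : ℝ, 0 < a → 0 < b → a ≠ b →
      (let S : ℝ → ℝ → ℝ := fun u v =>
        α * (v - u) / (2 * Real.arctan ((v ^ α - u ^ α) / (v ^ α + u ^ α)));
      (S a (Real.sqrt (a * b)) + S (Real.sqrt (a * b)) b) / 2 < S a b)) :=
  stmt_16_general α hα
end

section
/- For 0 < α < 1/2 and all x > 0, sinh(2αx) > 2·sinh(αx); consequently, for the mean L_α(a,b) = 2α·a^α·b^α·(b−a)/(b^{2α}−a^{2α}), one has L_α(a,b) < R(A,L_α,G)(a,b) for all positive a ≠ b, where A is the arithmetic mean, G the geometric mean, and R(K,M,N)(a,b) = K(M(a,N(a,b)), M(N(a,b),b)). -/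
/-!
The first inequality is `sinh (2y) = 2 sinh y cosh y` together with `cosh y > 1` for `y ≠ 0`.

For the mean, put `p = a ^ α`, `q = b ^ α` and `g = √(ab)`, so that `(g ^ α) ^ 2 = pq`. Then
`L(a, b) = 2α · pq / (p + q) · (b - a) / (q - p)`, while in `L(a, g)` and `L(g, b)` the factors `p`
and `q` cancel against `g ^ (2α) - a ^ (2α) = p (q - p)` and `b ^ (2α) - g ^ (2α) = q (q - p)`, giving
`L(a, g) + L(g, b) = 2α · g ^ α · (b - a) / (q - p)`. As `(b - a) / (q - p) > 0`, the claim reduces to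
the strict inequality between the harmonic and the geometric mean of `p ≠ q`.
-/

open Real

lemma two_mul_sinh_lt_sinh_two_mul {x : ℝ} (hx : 0 < x) : 2 * sinh x < sinh (2 * x) := by
  rw [sinh_two_mul]
  exact lt_mul_of_one_lt_right (by positivity [sinh_pos_iff.mpr hx]) (one_lt_cosh.mpr hx.ne')

lemma two_mul_mul_div_add_lt {p q r : ℝ} (hp : 0 < p) (hq : 0 < q) (hpq : p ≠ q) (hr : 0 < r)
    (hr2 : r ^ 2 = p * q) : 2 * (p * q / (p + q)) < r := by
  have hsq : 0 < (p - q) ^ 2 := by positivity [sub_ne_zero.mpr hpq]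
  have hgm : 2 * r < p + q := by nlinarith
  rw [mul_div_assoc', div_lt_iff₀ (by positivity), ← hr2]
  nlinarith

lemma rpow_two_mul {x : ℝ} (hx : 0 ≤ x) (α : ℝ) : x ^ (2 * α) = (x ^ α) ^ 2 := by
  rw [mul_comm, ← rpow_mul_natCast hx]
  norm_num

lemma sqrt_mul_rpow_sq {a b : ℝ} (ha : 0 ≤ a) (hb : 0 ≤ b) (α : ℝ) :
    (√(a * b) ^ α) ^ 2 = a ^ α * b ^ α := by
  rw [← rpow_two_mul (sqrt_nonneg _), rpow_mul (sqrt_nonneg _), rpow_two,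
    sq_sqrt (mul_nonneg ha hb), mul_rpow ha hb]

lemma sub_div_rpow_sub_rpow_pos {α a b : ℝ} (hα : 0 < α) (ha : 0 < a) (hb : 0 < b) (hab : a ≠ b) :
    0 < (b - a) / (b ^ α - a ^ α) := by
  rcases hab.lt_or_gt with h | h
  · exact div_pos (sub_pos.mpr h) (sub_pos.mpr (rpow_lt_rpow ha.le h hα))
  · exact div_pos_of_neg_of_neg (sub_neg.mpr h) (sub_neg.mpr (rpow_lt_rpow hb.le h hα))

noncomputable def meanL (α u v : ℝ) : ℝ :=
  2 * α * u ^ α * v ^ α * (v - u) / (v ^ (2 * α) - u ^ (2 * α))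

lemma meanL_eq {α u v : ℝ} (hu : 0 ≤ u) (hv : 0 ≤ v) :
    meanL α u v =
      2 * α * (u ^ α * v ^ α / (u ^ α + v ^ α)) * ((v - u) / (v ^ α - u ^ α)) := by
  rw [meanL, rpow_two_mul hu, rpow_two_mul hv, sq_sub_sq, div_eq_mul_inv, mul_inv]
  ring

lemma meanL_add_meanL_sqrt {α a b : ℝ} (ha : 0 < a) (hb : 0 < b) :
    meanL α a √(a * b) + meanL α √(a * b) b =
      2 * α * √(a * b) ^ α * ((b - a) / (b ^ α - a ^ α)) := by
  have hg := sqrt_mul_rpow_sq ha.le hb.le α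
  unfold meanL
  set g := √(a * b)
  set p := a ^ α
  set q := b ^ α
  have hp : p ≠ 0 := (rpow_pos_of_pos ha α).ne'
  have hq : q ≠ 0 := (rpow_pos_of_pos hb α).ne'
  have hga : g ^ (2 * α) - a ^ (2 * α) = p * (q - p) := by
    rw [rpow_two_mul (sqrt_nonneg _), rpow_two_mul ha.le, hg]; ring
  have hbg : b ^ (2 * α) - g ^ (2 * α) = q * (q - p) := by
    rw [rpow_two_mul (sqrt_nonneg _), rpow_two_mul hb.le, hg]; ring
  rw [hga, hbg]
  calc _ = p * (2 * α * g ^ α * (g - a)) / (p * (q - p)) +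
          q * (2 * α * g ^ α * (b - g)) / (q * (q - p)) := by
        ring
    _ = 2 * α * g ^ α * ((b - a) / (q - p)) := by
        rw [mul_div_mul_left _ _ hp, mul_div_mul_left _ _ hq, ← add_div]; ring

lemma meanL_lt_half_add_sqrt {α a b : ℝ} (hα : 0 < α) (ha : 0 < a) (hb : 0 < b) (hab : a ≠ b) :
    meanL α a b < (meanL α a √(a * b) + meanL α √(a * b) b) / 2 := by
  have ht := sub_div_rpow_sub_rpow_pos hα ha hb hab
  have hmean := two_mul_mul_div_add_lt (rpow_pos_of_pos ha α) (rpow_pos_of_pos hb α)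
    (fun h => hab ((rpow_left_inj ha.le hb.le hα.ne').mp h))
    (rpow_pos_of_pos (sqrt_pos.mpr (mul_pos ha hb)) α) (sqrt_mul_rpow_sq ha.le hb.le α)
  rw [meanL_eq ha.le hb.le, meanL_add_meanL_sqrt ha hb]
  linear_combination mul_lt_mul_of_pos_left hmean (mul_pos hα ht)

theorem stmt_17_general (α : ℝ) (hα : 0 < α) :
    (∀ x : ℝ, 0 < x → Real.sinh (2 * α * x) > 2 * Real.sinh (α * x)) ∧
    (∀ a b : ℝ, 0 < a → 0 < b → a ≠ b →
      (let L : ℝ → ℝ → ℝ := fun u v =>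
        2 * α * u ^ α * v ^ α * (v - u) / (v ^ (2 * α) - u ^ (2 * α));
      L a b < (L a (Real.sqrt (a * b)) + L (Real.sqrt (a * b)) b) / 2)) := by
  refine ⟨fun x hx => ?_, fun a b ha hb hab => meanL_lt_half_add_sqrt hα ha hb hab⟩
  rw [mul_assoc]
  exact two_mul_sinh_lt_sinh_two_mul (mul_pos hα hx)

theorem stmt_17 (α : ℝ) (hα : 0 < α) (hα2 : α < 1 / 2) :
    (∀ x : ℝ, 0 < x → Real.sinh (2 * α * x) > 2 * Real.sinh (α * x)) ∧
    (∀ a b : ℝ, 0 < a → 0 < b → a ≠ b →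
      (let L : ℝ → ℝ → ℝ := fun u v =>
        2 * α * u ^ α * v ^ α * (v - u) / (v ^ (2 * α) - u ^ (2 * α));
      L a b < (L a (Real.sqrt (a * b)) + L (Real.sqrt (a * b)) b) / 2)) :=
  stmt_17_general α hα
end
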